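/- arXiv:2002.00076 — 3 statements merged into one kernel-verified Lean document; each statement's English description precedes it below -/
import Mathlib

section
/- Let (Ω,d) be a separable metric space and μ a finite Borel measure on Ω. Suppose there exists δ > 0 such that every Borel set A ⊆ Ω satisfies either μ(A) = 0 or μ(A) ≥ δ. Then there exist a finite set of points x_1, …, x_N ∈ Ω and real numbers μ_1, …, μ_N with each μ_i ≥ δ such that μ = Σ_{i=1}^N μ_i δ_{x_i}, where δ_x denotes the Dirac measure at x. -/
open MeasureTheory ENNReal Filter Topology

/-!
Only finitely many points can carry mass at least `δ`. Every other point `x` has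
`μ {x} < δ`, so by continuity from above some closed ball around `x` has measure `< δ`, hence
measure `0` by the gap. By second countability the set of those points is then `μ`-null, and
`μ` lives on the finite set of heavy points.
-/

namespace MeasureTheory

theorem finite_setOfPred_le_measure_singleton {α : Type*} [MeasurableSpace α]
    [MeasurableSingletonClass α] (μ : Measure α) [IsFiniteMeasure μ] {c : ℝ≥0∞} (hc : 0 < c) :
    {x : α | c ≤ μ {x}}.Finite :=
  Measure.finite_const_le_meas_of_disjoint_iUnion μ hc measurableSet_singleton
    (fun _ _ hxy => Set.disjoint_singleton.2 hxy) (measure_ne_top μ _)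

theorem eventually_measure_closedBall_lt {α : Type*} [MetricSpace α] [MeasurableSpace α]
    [OpensMeasurableSpace α] (μ : Measure α) [IsFiniteMeasure μ] {x : α} {c : ℝ≥0∞}
    (hx : μ {x} < c) : ∀ᶠ r in 𝓝[>] (0 : ℝ), μ (Metric.closedBall x r) < c := by
  have hlim := tendsto_measure_cthickening_of_isClosed (μ := μ)
    ⟨1, one_pos, measure_ne_top μ _⟩ (isClosed_singleton (x := x))
  filter_upwards [(hlim.mono_left nhdsWithin_le_nhds).eventually (gt_mem_nhds hx),
    self_mem_nhdsWithin] with r hr hr_pos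
  rwa [← Metric.cthickening_singleton x (le_of_lt hr_pos)]

theorem measure_setOfPred_measure_singleton_lt_eq_zero {α : Type*} [MetricSpace α]
    [SecondCountableTopology α] [MeasurableSpace α] [OpensMeasurableSpace α]
    (μ : Measure α) [IsFiniteMeasure μ] {c : ℝ≥0∞}
    (hgap : ∀ A : Set α, MeasurableSet A → μ A = 0 ∨ c ≤ μ A) :
    μ {x : α | μ {x} < c} = 0 := by
  refine measure_null_of_locally_null _ fun x hx => ?_
  obtain ⟨r, hr, hr_pos⟩ :=
    ((eventually_measure_closedBall_lt μ hx).and self_mem_nhdsWithin).exists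
  refine ⟨Metric.closedBall x r,
    mem_nhdsWithin_of_mem_nhds (Metric.closedBall_mem_nhds x hr_pos), ?_⟩
  exact (hgap _ Metric.isClosed_closedBall.measurableSet).resolve_right (not_le.2 hr)

theorem Measure.eq_sum_smul_dirac_of_measure_compl_eq_zero {α : Type*} [MeasurableSpace α]
    [MeasurableSingletonClass α] (μ : Measure α) {s : Finset α} (hs : μ (↑s)ᶜ = 0) :
    μ = ∑ x ∈ s, μ {x} • Measure.dirac x := by
  classical
  ext t ht
  simp only [Measure.finsetSum_apply, Measure.smul_apply, smul_eq_mul,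
    Measure.dirac_apply' _ ht, Set.indicator_apply, Pi.one_apply, mul_ite, mul_one, mul_zero]
  rw [← Finset.sum_filter, sum_measure_singleton, Finset.coe_filter, ← measure_inter_conull hs,
    Set.inter_comm]
  rfl

end MeasureTheory

/-- Lemma 2.4: if a finite Borel measure on a separable metric
space gives every Borel set measure either `0` or at least `δ > 0`, then it is
a finite sum of point masses of weights at least `δ`. -/
theorem finite_sum_of_diracs_of_gap
    {Ω : Type*} [MetricSpace Ω] [TopologicalSpace.SeparableSpace Ω]
    [MeasurableSpace Ω] [BorelSpace Ω]
    (μ : Measure Ω) [IsFiniteMeasure μ]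
    (δ : ℝ) (hδ : 0 < δ)
    (hgap : ∀ A : Set Ω, MeasurableSet A → μ A = 0 ∨ ENNReal.ofReal δ ≤ μ A) :
    ∃ (N : ℕ) (x : Fin N → Ω) (c : Fin N → ℝ),
      (∀ i, δ ≤ c i) ∧
      μ = ∑ i : Fin N, ENNReal.ofReal (c i) • Measure.dirac (x i) := by
  have hfin := finite_setOfPred_le_measure_singleton μ (ENNReal.ofReal_pos.2 hδ)
  have hnull : μ (↑hfin.toFinset)ᶜ = 0 := by
    simpa [Set.compl_ofPred] using measure_setOfPred_measure_singleton_lt_eq_zero μ hgap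
  let e := hfin.toFinset.equivFin
  refine ⟨_, fun i => e.symm i, fun i => μ.real {(e.symm i : Ω)}, fun i => ?_, ?_⟩
  · have hmem : ENNReal.ofReal δ ≤ μ {(e.symm i : Ω)} := hfin.mem_toFinset.1 (e.symm i).2
    exact (ENNReal.ofReal_le_iff_le_toReal (measure_ne_top μ _)).1 hmem
  · conv_lhs => rw [Measure.eq_sum_smul_dirac_of_measure_compl_eq_zero μ hnull]
    rw [← Finset.sum_coe_sort, ← e.symm.sum_comp]
    simp only [ofReal_measureReal (measure_ne_top μ _)]
end

section
/- Let (X,d) be a locally compact metric space, Ω ⊆ X an open precompact subset, and μ, ν Radon measures on Ω. Let 1 ≤ p < r < ∞ and suppose there exists C > 0 such that ‖φ‖_{L^r(Ω,μ)} ≤ C‖φ‖_{L^p(Ω,ν)} for every Lipschitz function φ : Ω → ℝ with compact support in Ω. Then there exist a countable set of points {x_i}_{i∈I} in Ω and positive real numbers {μ_i}_{i∈I} such that μ = Σ_{i∈I} μ_i δ_{x_i}. -/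
/-!
Testing the inequality on Lipschitz bumps that equal `1` on a compact set `K ⊆ Ω` and vanish
off a thin neighbourhood of `K` gives `μ K ≤ C ^ r * ν K ^ (r / p)`, and inner regularity extends
this to all Borel subsets of `Ω`. As `r / p > 1`, the bound is superlinear in `ν`. Away from the
(countably many) atoms of `ν`, every point has a neighbourhood of `ν`-measure less than `ε`, so
compactness of `closure Ω` cuts that part into finitely many pieces of `ν`-measure at most `ε`,
and summing the bound over the pieces gives `μ ≤ C ^ r * ε ^ (r / p - 1) * ν (closure Ω)` there.
Letting `ε → 0`, `μ` is carried by the atoms of `ν`, hence is the sum of its point masses.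
-/

open MeasureTheory Measure ENNReal NNReal Filter Topology Metric Set

theorem ENNReal.rpow_le_rpow_sub_one_mul {x ε : ℝ≥0∞} {q : ℝ} (hq : 1 ≤ q) (hx : x ≤ ε) :
    x ^ q ≤ ε ^ (q - 1) * x :=
  calc x ^ q = x ^ (q - 1 + 1) := by rw [sub_add_cancel]
    _ = x ^ (q - 1) * x := by
      rw [ENNReal.rpow_add_of_nonneg _ _ (by linarith) zero_le_one, ENNReal.rpow_one]
    _ ≤ ε ^ (q - 1) * x := by gcongr

section LpNorm

variable {α E : Type*} [MeasurableSpace α] [NormedAddCommGroup E] {μ : Measure α}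
  {f : α → E} {s : Set α} {p : ℝ}

theorem measure_rpow_le_eLpNorm_of_one_le_norm (hs : MeasurableSet s)
    (hf : ∀ x ∈ s, 1 ≤ ‖f x‖) (hp : 0 < p) : μ s ^ (1 / p) ≤ eLpNorm f (.ofReal p) μ :=
  calc μ s ^ (1 / p) = eLpNorm (s.indicator fun _ ↦ (1 : ℝ)) (.ofReal p) μ := by
        rw [eLpNorm_indicator_const hs (by simpa using hp) ofReal_ne_top,
          ENNReal.toReal_ofReal hp.le, enorm_one, one_mul]
    _ ≤ eLpNorm f (.ofReal p) μ := eLpNorm_mono fun x ↦ by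
        by_cases hx : x ∈ s <;> simp [hx, hf]

theorem eLpNorm_le_measure_rpow_of_norm_le_one (hs : MeasurableSet s) (hf : ∀ x, ‖f x‖ ≤ 1)
    (hfs : Function.support f ⊆ s) (hp : 0 < p) : eLpNorm f (.ofReal p) μ ≤ μ s ^ (1 / p) :=
  calc eLpNorm f (.ofReal p) μ ≤ eLpNorm (s.indicator fun _ ↦ (1 : ℝ)) (.ofReal p) μ :=
        eLpNorm_mono fun x ↦ by
          by_cases hx : x ∈ s
          · simpa [hx] using hf x
          · simp [hx, Function.notMem_support.1 (mt (@hfs x) hx)]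
    _ = μ s ^ (1 / p) := by
        rw [eLpNorm_indicator_const hs (by simpa using hp) ofReal_ne_top,
          ENNReal.toReal_ofReal hp.le, enorm_one, one_mul]

end LpNorm

section Measure

variable {α : Type*} [MeasurableSpace α] {μ ν : Measure α}

theorem measure_le_mul_rpow_mul_of_cover {ι : Type*} [LinearOrder ι] [LocallyFiniteOrderBot ι]
    [Countable ι] {s : Set α} (hs : MeasurableSet s) {c : ℝ≥0∞} {q : ℝ} (hq : 1 ≤ q)
    (h : ∀ t ⊆ s, MeasurableSet t → μ t ≤ c * ν t ^ q) {B : ι → Set α}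
    (hB : ∀ i, MeasurableSet (B i)) (hsB : s ⊆ ⋃ i, B i) {ε : ℝ≥0∞} (hε : ∀ i, ν (B i) ≤ ε) :
    μ s ≤ c * ε ^ (q - 1) * ν s := by
  set D : ι → Set α := fun i ↦ s ∩ disjointed B i
  have hD : ∀ i, MeasurableSet (D i) := fun i ↦ by
    simp only [D, disjointed, Finset.sup_set_eq_biUnion]
    exact hs.inter ((hB i).diff (Finset.measurableSet_biUnion _ fun j _ ↦ hB j))
  have hsD : ⋃ i, D i = s := by
    rw [← inter_iUnion, iUnion_disjointed, inter_eq_left.2 hsB]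
  have hDdisj : Pairwise (Function.onFun Disjoint D) :=
    (disjoint_disjointed B).mono fun i j h ↦ h.mono inter_subset_right inter_subset_right
  have hDε : ∀ i, ν (D i) ≤ ε := fun i ↦
    (measure_mono (inter_subset_right.trans (disjointed_subset B i))).trans (hε i)
  calc μ s ≤ ∑' i, μ (D i) := hsD ▸ measure_iUnion_le D
    _ ≤ ∑' i, c * (ε ^ (q - 1) * ν (D i)) := ENNReal.tsum_le_tsum fun i ↦
        (h _ inter_subset_left (hD i)).trans
          (mul_le_mul_right (ENNReal.rpow_le_rpow_sub_one_mul hq (hDε i)) c)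
    _ = c * ε ^ (q - 1) * ν s := by
        rw [ENNReal.tsum_mul_left, ENNReal.tsum_mul_left, ← measure_iUnion hDdisj hD, hsD,
          mul_assoc]

theorem Measure.countable_setOf_measure_singleton_ne_zero [MeasurableSingletonClass α]
    [SFinite ν] : {x | ν {x} ≠ 0}.Countable := by
  simpa [pos_iff_ne_zero] using countable_meas_pos_of_disjoint_iUnion (μ := ν)
    measurableSet_singleton fun x y hxy ↦ disjoint_singleton.2 hxy

theorem Measure.restrict_eq_sum_smul_dirac [MeasurableSingletonClass α] {S : Set α}
    (hS : S.Countable) : μ.restrict S = sum fun x : S ↦ μ {(x : α)} • dirac (x : α) := by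
  conv_lhs => rw [← biUnion_of_singleton S]
  rw [restrict_biUnion hS.to_subtype (fun x _ y _ hxy ↦ disjoint_singleton.2 hxy)
    measurableSet_singleton]
  simp

theorem Measure.exists_eq_sum_smul_dirac_of_ae_mem [MeasurableSingletonClass α]
    [IsFiniteMeasure μ] {A : Set α} (hA : A.Countable) (hμA : ∀ᵐ x ∂μ, x ∈ A) :
    ∃ (ι : Type) (_ : Countable ι) (x : ι → α) (c : ι → ℝ), (∀ i, x i ∈ A) ∧ (∀ i, 0 < c i) ∧
      μ = sum fun i ↦ ENNReal.ofReal (c i) • dirac (x i) := by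
  set S := {x ∈ A | μ {x} ≠ 0}
  have hS : S.Countable := hA.mono (sep_subset _ _)
  have hnull : μ {x ∈ A | μ {x} = 0} = 0 := by
    rw [← biUnion_of_singleton {x ∈ A | μ {x} = 0},
      measure_biUnion_null_iff (hA.mono (sep_subset _ _))]
    exact fun x hx ↦ hx.2
  have hμS : ∀ᵐ x ∂μ, x ∈ S := by
    filter_upwards [hμA, measure_eq_zero_iff_ae_notMem.1 hnull] with x hxA hx
    exact ⟨hxA, fun h ↦ hx ⟨hxA, h⟩⟩
  have := hS.to_subtype
  set e := equivShrink.{0} S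
  refine ⟨Shrink S, .of_equiv _ e, fun i ↦ e.symm i, fun i ↦ (μ {(e.symm i : α)}).toReal,
    fun i ↦ (e.symm i).2.1, fun i ↦ toReal_pos (e.symm i).2.2 (measure_ne_top _ _), ?_⟩
  calc μ = μ.restrict S := (restrict_eq_self_of_ae_mem hμS).symm
    _ = _ := by
      rw [restrict_eq_sum_smul_dirac hS, ← sum_comp_equiv e.symm]
      simp [Function.comp_def]

theorem Measure.mem_of_restrict_singleton_ne_zero [MeasurableSingletonClass α] {s : Set α}
    {x : α} (hx : μ.restrict s {x} ≠ 0) : x ∈ s := by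
  by_contra hxs
  exact hx (by rw [Measure.restrict_apply (measurableSet_singleton x),
    singleton_inter_eq_empty.2 hxs, measure_empty])

variable [TopologicalSpace α]

theorem measure_le_mul_rpow_of_isCompact [μ.InnerRegularCompactLTTop] {s : Set α}
    (hs : MeasurableSet s) (hμs : μ s ≠ ∞) {c : ℝ≥0∞} {q : ℝ} (hq : 0 ≤ q)
    (h : ∀ K ⊆ s, IsCompact K → μ K ≤ c * ν K ^ q) : μ s ≤ c * ν s ^ q := by
  rw [hs.measure_eq_iSup_isCompact_of_ne_top hμs]
  refine iSup₂_le fun K hKs ↦ iSup_le fun hK ↦ (h K hKs hK).trans ?_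
  gcongr

theorem IsCompact.exists_finite_cover_measure_lt [ν.OuterRegular] [NullSingletonClass ν]
    {K : Set α} (hK : IsCompact K) {ε : ℝ≥0∞} (hε : 0 < ε) :
    ∃ (n : ℕ) (U : Fin n → Set α), (∀ i, IsOpen (U i)) ∧ K ⊆ ⋃ i, U i ∧ ∀ i, ν (U i) < ε := by
  choose V hxV hVo hVε using fun x : α ↦
    ({x} : Set α).exists_isOpen_lt_of_lt ε (by rwa [measure_singleton (μ := ν)])
  obtain ⟨t, ht⟩ := hK.elim_finite_subcover V hVo fun x _ ↦ mem_iUnion.2 ⟨x, hxV x rfl⟩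
  refine ⟨t.card, fun i ↦ V (t.equivFin.symm i), fun i ↦ hVo _, fun x hx ↦ ?_, fun i ↦ hVε _⟩
  obtain ⟨y, hy, hxy⟩ := mem_iUnion₂.1 (ht hx)
  exact mem_iUnion.2 ⟨t.equivFin ⟨y, hy⟩, by simpa using hxy⟩

theorem IsCompact.measure_eq_zero_of_le_mul_rpow [OpensMeasurableSpace α] [T2Space α]
    [ν.OuterRegular] [NullSingletonClass ν] [IsFiniteMeasureOnCompacts ν] {K : Set α}
    (hK : IsCompact K) {c : ℝ≥0∞} (hc : c ≠ ∞) {q : ℝ} (hq : 1 < q)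
    (h : ∀ s ⊆ K, MeasurableSet s → μ s ≤ c * ν s ^ q) : μ K = 0 := by
  have hbound : ∀ ε > 0, μ K ≤ c * ε ^ (q - 1) * ν K := fun ε hε ↦ by
    obtain ⟨n, U, hUo, hKU, hUε⟩ := hK.exists_finite_cover_measure_lt (ν := ν) hε
    exact measure_le_mul_rpow_mul_of_cover hK.isClosed.measurableSet hq.le h
      (fun i ↦ (hUo i).measurableSet) hKU fun i ↦ (hUε i).le
  have hlim : Tendsto (fun ε : ℝ≥0∞ ↦ c * ε ^ (q - 1) * ν K) (𝓝[>] 0) (𝓝 0) := by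
    have := ENNReal.Tendsto.mul_const (ENNReal.Tendsto.const_mul
      ((ENNReal.continuous_rpow_const (y := q - 1)).tendsto 0) (Or.inr hc))
      (Or.inr hK.measure_lt_top.ne) (b := ν K)
    rw [zero_rpow_of_pos (by linarith), mul_zero, zero_mul] at this
    exact this.mono_left nhdsWithin_le_nhds
  exact le_antisymm (ge_of_tendsto hlim (eventually_nhdsWithin_of_forall hbound)) bot_le

theorem ae_measure_singleton_ne_zero_of_le_mul_rpow [TopologicalSpace.MetrizableSpace α]
    [BorelSpace α] [IsFiniteMeasure ν] {K : Set α} (hK : IsCompact K) (hνK : ν Kᶜ = 0)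
    {c : ℝ≥0∞} (hc : c ≠ ∞) {q : ℝ} (hq : 1 < q)
    (h : ∀ s, MeasurableSet s → μ s ≤ c * ν s ^ q) : ∀ᵐ x ∂μ, ν {x} ≠ 0 := by
  set N := {x | ν {x} = 0}
  have hN : MeasurableSet N := by
    simpa [N, ← compl_ofPred] using countable_setOf_measure_singleton_ne_zero.measurableSet.compl
  have : NullSingletonClass (ν.restrict N) := ⟨fun x ↦ by
    rw [Measure.restrict_apply (measurableSet_singleton x)]
    by_cases hx : x ∈ N
    · exact measure_mono_null inter_subset_left hx
    · simp [singleton_inter_eq_empty.2 hx]⟩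
  have hKN : μ (K ∩ N) = 0 := by
    rw [← Measure.restrict_apply hK.isClosed.measurableSet]
    refine hK.measure_eq_zero_of_le_mul_rpow (ν := ν.restrict N) hc hq fun s _ hs ↦ ?_
    simpa only [Measure.restrict_apply hs] using h _ (hs.inter hN)
  have hKc : μ Kᶜ = 0 := by
    simpa [hνK, zero_rpow_of_pos (zero_lt_one.trans hq)] using
      h _ hK.isClosed.measurableSet.compl
  rw [ae_iff]
  simp only [ne_eq, not_not]
  exact measure_mono_null (fun x hx ↦ (em (x ∈ K)).imp (fun hxK ↦ ⟨hxK, hx⟩) id)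
    (measure_union_null hKN hKc)

end Measure

section Metric

variable {X : Type*} [MetricSpace X] [MeasurableSpace X] [OpensMeasurableSpace X]
  {μ ν : Measure X} {K Ω : Set X} {p r : ℝ} {c : ℝ≥0∞}

theorem measure_rpow_le_of_eLpNorm_le_of_cthickening (hK : MeasurableSet K) {δ : ℝ}
    (hδ : 0 < δ) (hδK : IsCompact (cthickening δ K)) (hδΩ : cthickening δ K ⊆ Ω) (hp : 0 < p)
    (hr : 0 < r)
    (h : ∀ φ : X → ℝ, (∃ L, LipschitzWith L φ) → HasCompactSupport φ → tsupport φ ⊆ Ω →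
      eLpNorm φ (.ofReal r) μ ≤ c * eLpNorm φ (.ofReal p) ν) :
    μ K ^ (1 / r) ≤ c * ν (thickening δ K) ^ (1 / p) := by
  set φ : X → ℝ := ((↑) : ℝ≥0 → ℝ) ∘ thickenedIndicator hδ K
  have hφK : ∀ x ∈ K, φ x = 1 := fun x hx ↦ by
    simp only [φ, Function.comp_apply, thickenedIndicator_one hδ K hx, NNReal.coe_one]
  have hφ1 : ∀ x, ‖φ x‖ ≤ 1 := fun x ↦ by simpa [φ] using thickenedIndicator_le_one hδ K x
  have hφsupp : Function.support φ ⊆ thickening δ K := fun x hx ↦ by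
    by_contra hxK
    exact hx (by simp only [φ, Function.comp_apply, thickenedIndicator_zero hδ K hxK,
      NNReal.coe_zero])
  have htsupp : tsupport φ ⊆ cthickening δ K :=
    closure_minimal (hφsupp.trans (thickening_subset_cthickening δ K)) isClosed_cthickening
  have hlip : LipschitzWith δ.toNNReal⁻¹ φ := by
    simpa only [one_mul] using
      NNReal.isometry_coe.lipschitz.comp (lipschitzWith_thickenedIndicator hδ K)
  calc μ K ^ (1 / r) ≤ eLpNorm φ (.ofReal r) μ :=
        measure_rpow_le_eLpNorm_of_one_le_norm hK (fun x hx ↦ by rw [hφK x hx, norm_one]) hr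
    _ ≤ c * eLpNorm φ (.ofReal p) ν :=
        h φ ⟨_, hlip⟩ (hδK.of_isClosed_subset isClosed_closure htsupp) (htsupp.trans hδΩ)
    _ ≤ c * ν (thickening δ K) ^ (1 / p) := by
        gcongr
        exact eLpNorm_le_measure_rpow_of_norm_le_one isOpen_thickening.measurableSet hφ1 hφsupp hp

theorem measure_le_mul_rpow_of_eLpNorm_le [LocallyCompactSpace X] [IsFiniteMeasureOnCompacts ν]
    (hK : IsCompact K) (hΩ : IsOpen Ω) (hKΩ : K ⊆ Ω) (hp : 0 < p) (hr : 0 < r) (hc : c ≠ ∞)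
    (h : ∀ φ : X → ℝ, (∃ L, LipschitzWith L φ) → HasCompactSupport φ → tsupport φ ⊆ Ω →
      eLpNorm φ (.ofReal r) μ ≤ c * eLpNorm φ (.ofReal p) ν) :
    μ K ≤ c ^ r * ν K ^ (r / p) := by
  obtain ⟨δ₀, hδ₀, hδ₀K⟩ := hK.exists_isCompact_cthickening
  obtain ⟨δ₁, hδ₁, hδ₁Ω⟩ := hK.exists_cthickening_subset_open hΩ hKΩ
  have hbump : ∀ δ ∈ Ioo 0 (min δ₀ δ₁), μ K ^ (1 / r) ≤ c * ν (thickening δ K) ^ (1 / p) := by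
    rintro δ ⟨hδ, hδmin⟩
    exact measure_rpow_le_of_eLpNorm_le_of_cthickening hK.isClosed.measurableSet hδ
      (hδ₀K.of_isClosed_subset isClosed_cthickening
        (cthickening_mono (hδmin.le.trans (min_le_left _ _)) K))
      ((cthickening_mono (hδmin.le.trans (min_le_right _ _)) K).trans hδ₁Ω) hp hr h
  have hν : ν (thickening δ₀ K) ≠ ∞ :=
    ((measure_mono (thickening_subset_cthickening _ _)).trans_lt hδ₀K.measure_lt_top).ne
  have hlim : Tendsto (fun δ ↦ c * ν (thickening δ K) ^ (1 / p)) (𝓝[>] 0)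
      (𝓝 (c * ν K ^ (1 / p))) :=
    ENNReal.Tendsto.const_mul ((ENNReal.continuous_rpow_const.tendsto _).comp
      (tendsto_measure_thickening_of_isClosed ⟨δ₀, hδ₀, hν⟩ hK.isClosed)) (Or.inr hc)
  have key : μ K ^ (1 / r) ≤ c * ν K ^ (1 / p) :=
    ge_of_tendsto hlim (eventually_of_mem (Ioo_mem_nhdsGT (lt_min hδ₀ hδ₁)) hbump)
  calc μ K ≤ (c * ν K ^ (1 / p)) ^ r := (ENNReal.rpow_inv_le_iff hr).1 (one_div r ▸ key)
    _ = c ^ r * ν K ^ (r / p) := by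
      rw [ENNReal.mul_rpow_of_nonneg _ _ hr.le, ← ENNReal.rpow_mul, one_div_mul_eq_div]

end Metric

theorem reverse_holder_atomic_general
    {X : Type*} [MetricSpace X] [LocallyCompactSpace X]
    [MeasurableSpace X] [BorelSpace X]
    (μ ν : Measure X) [μ.Regular] [ν.Regular]
    (Ω : Set X) (hΩopen : IsOpen Ω) (hΩcpt : IsCompact (closure Ω))
    (p r : ℝ) (hp : 1 ≤ p) (hpr : p < r)
    (C : ℝ)
    (hrh : ∀ φ : X → ℝ, (∃ K : ℝ≥0, LipschitzWith K φ) →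
      IsCompact (closure (Function.support φ)) →
      closure (Function.support φ) ⊆ Ω →
      eLpNorm φ (ENNReal.ofReal r) (μ.restrict Ω) ≤
        ENNReal.ofReal C * eLpNorm φ (ENNReal.ofReal p) (ν.restrict Ω)) :
    ∃ (ι : Type) (_ : Countable ι) (x : ι → X) (c : ι → ℝ),
      (∀ i, x i ∈ Ω) ∧ (∀ i, 0 < c i) ∧
      μ.restrict Ω = Measure.sum (fun i => ENNReal.ofReal (c i) • Measure.dirac (x i)) := by
  have hp0 : 0 < p := by linarith
  have hr0 : 0 < r := hp0.trans hpr
  have hfin (ρ : Measure X) [IsFiniteMeasureOnCompacts ρ] : IsFiniteMeasure (ρ.restrict Ω) :=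
    isFiniteMeasure_restrict.2 ((measure_mono subset_closure).trans_lt hΩcpt.measure_lt_top).ne
  have := hfin μ
  have := hfin ν
  have hmeas : ∀ s, MeasurableSet s →
      μ.restrict Ω s ≤ ENNReal.ofReal C ^ r * ν.restrict Ω s ^ (r / p) := fun s hs ↦ by
    have := measure_le_mul_rpow_of_isCompact (hs.inter hΩopen.measurableSet) (measure_ne_top _ _)
      (div_pos hr0 hp0).le fun K hKs hK ↦ measure_le_mul_rpow_of_eLpNorm_le hK hΩopen
        (hKs.trans inter_subset_right) hp0 hr0 ofReal_ne_top hrh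
    simpa [Measure.restrict_apply, hs, hs.inter hΩopen.measurableSet, inter_assoc] using this
  have hνΩ : ν.restrict Ω (closure Ω)ᶜ = 0 := by
    rw [Measure.restrict_apply' hΩopen.measurableSet]
    exact measure_mono_null (fun x hx ↦ hx.1 (subset_closure hx.2)) measure_empty
  have hatoms := ae_measure_singleton_ne_zero_of_le_mul_rpow hΩcpt hνΩ
    (rpow_ne_top_of_nonneg hr0.le ofReal_ne_top) ((one_lt_div hp0).2 hpr) hmeas
  obtain ⟨ι, hι, x, c, hxA, hc, hμ⟩ :=
    exists_eq_sum_smul_dirac_of_ae_mem countable_setOf_measure_singleton_ne_zero hatoms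
  exact ⟨ι, hι, x, c, fun i ↦ mem_of_restrict_singleton_ne_zero (hxA i), hc, hμ⟩

/-- Lemma 3.1, Reverse Hölder: in a locally compact metric space
with Radon measures `μ, ν` and a precompact open `Ω`, if
`‖φ‖_{L^r(Ω,μ)} ≤ C ‖φ‖_{L^p(Ω,ν)}` for all Lipschitz `φ` compactly supported
in `Ω` and `1 ≤ p < r`, then `μ` on `Ω` is a countable sum of point masses. -/
theorem reverse_holder_atomic
    {X : Type*} [MetricSpace X] [LocallyCompactSpace X]
    [MeasurableSpace X] [BorelSpace X]
    (μ ν : Measure X) [μ.Regular] [ν.Regular]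
    (Ω : Set X) (hΩopen : IsOpen Ω) (hΩcpt : IsCompact (closure Ω))
    (p r : ℝ) (hp : 1 ≤ p) (hpr : p < r)
    (C : ℝ) (hC : 0 < C)
    (hrh : ∀ φ : X → ℝ, (∃ K : ℝ≥0, LipschitzWith K φ) →
      IsCompact (closure (Function.support φ)) →
      closure (Function.support φ) ⊆ Ω →
      eLpNorm φ (ENNReal.ofReal r) (μ.restrict Ω) ≤
        ENNReal.ofReal C * eLpNorm φ (ENNReal.ofReal p) (ν.restrict Ω)) :
    ∃ (ι : Type) (_ : Countable ι) (x : ι → X) (c : ι → ℝ),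
      (∀ i, x i ∈ Ω) ∧ (∀ i, 0 < c i) ∧
      μ.restrict Ω = Measure.sum (fun i => ENNReal.ofReal (c i) • Measure.dirac (x i)) :=
  reverse_holder_atomic_general μ ν Ω hΩopen hΩcpt p r hp hpr C hrh
end

section
/- Let (X,d) be a locally compact metric space, Ω ⊆ X an open precompact subset, and μ a Radon measure on Ω. Let 1 ≤ p < r < ∞ and suppose there exists C > 0 such that ‖φ‖_{L^r(Ω,μ)} ≤ C‖φ‖_{L^p(Ω,μ)} for every Lipschitz function φ : Ω → ℝ with compact support in Ω. Then there exist a finite set of points x_1, …, x_N ∈ Ω and real numbers μ_1, …, μ_N with each μ_i ≥ C^{−pr/(r−p)} such that μ = Σ_{i=1}^N μ_i δ_{x_i}. In particular, every Borel set A ⊆ Ω satisfies μ(A) = 0 or μ(A) ≥ C^{−pr/(r−p)}. -/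
open MeasureTheory ENNReal NNReal Filter Topology

/-!
Testing the inequality on a Lipschitz bump that equals `1` on a compact `K ⊆ Ω` and is supported
in an open `U ⊆ Ω` gives `μ K ^ (1/r) ≤ C μ U ^ (1/p)`. Outer regularity turns this into
`μ K ^ (1/r) ≤ C μ K ^ (1/p)`, which for `p < r` forces `μ K = 0` or `μ K ≥ C ^ (-pr/(r-p))`;
inner regularity extends this gap to all Borel subsets of `Ω`. A finite measure with such a gap
has finitely many atoms. Once they are removed, the measures of small balls tend to `0`, so every
point has a null neighbourhood, and compactness of `closure Ω` shows that the rest of `μ` vanishes.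
-/

namespace MeasureTheory.Measure

variable {X : Type*} [MeasurableSpace X] {ν : Measure X} {ε : ℝ≥0∞}

def HasMassGap (ν : Measure X) (ε : ℝ≥0∞) : Prop :=
  ∀ A, MeasurableSet A → ν A = 0 ∨ ε ≤ ν A

theorem HasMassGap.restrict (h : ν.HasMassGap ε) {s : Set X} (hs : MeasurableSet s) :
    (ν.restrict s).HasMassGap ε := fun A hA => by
  rw [restrict_apply hA]
  exact h _ (hA.inter hs)

theorem HasMassGap.finite_setOf_measure_singleton_ne_zero [MeasurableSingletonClass X]
    [IsFiniteMeasure ν] (h : ν.HasMassGap ε) (hε : ε ≠ 0) : {x | ν {x} ≠ 0}.Finite :=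
  (finite_const_le_meas_of_disjoint_iUnion ν (pos_iff_ne_zero.2 hε) measurableSet_singleton
      (fun _ _ hxy => Set.disjoint_singleton.2 hxy) (measure_ne_top ν _)).subset
    fun x hx => (h {x} (measurableSet_singleton x)).resolve_left hx

section Metric

variable [MetricSpace X] [OpensMeasurableSpace X] [IsFiniteMeasure ν]

theorem HasMassGap.exists_mem_nhds_measure_eq_zero (h : ν.HasMassGap ε) (hε : ε ≠ 0) {x : X}
    (hx : ν {x} = 0) : ∃ t ∈ 𝓝 x, ν t = 0 := by
  have hlim : Tendsto (fun r => ν (Metric.cthickening r {x})) (𝓝[>] 0) (𝓝 0) := by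
    rw [← hx]
    exact (tendsto_measure_cthickening_of_isClosed ⟨1, one_pos, measure_ne_top ν _⟩
      isClosed_singleton).mono_left nhdsWithin_le_nhds
  obtain ⟨r, hrε, hr⟩ :=
    ((hlim.eventually (gt_mem_nhds (pos_iff_ne_zero.2 hε))).and self_mem_nhdsWithin).exists
  rw [Metric.cthickening_singleton x (le_of_lt hr)] at hrε
  exact ⟨_, Metric.closedBall_mem_nhds x hr,
    (h _ Metric.isClosed_closedBall.measurableSet).resolve_right (not_le.2 hrε)⟩

theorem HasMassGap.measure_eq_zero_of_isCompact (h : ν.HasMassGap ε) (hε : ε ≠ 0) {K : Set X}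
    (hK : IsCompact K) (hK0 : ∀ x ∈ K, ν {x} = 0) : ν K = 0 :=
  hK.measure_zero_of_nhdsWithin fun x hx =>
    let ⟨t, ht, ht0⟩ := h.exists_mem_nhds_measure_eq_zero hε (hK0 x hx)
    ⟨t, mem_nhdsWithin_of_mem_nhds ht, ht0⟩

theorem HasMassGap.eq_sum_dirac (h : ν.HasMassGap ε) (hε : ε ≠ 0) {K : Set X}
    (hK : IsCompact K) (hνK : ν Kᶜ = 0) :
    ν = ∑ x ∈ (h.finite_setOf_measure_singleton_ne_zero hε).toFinset, ν {x} • dirac x := by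
  set S := {x | ν {x} ≠ 0}
  have hS : MeasurableSet Sᶜ :=
    (h.finite_setOf_measure_singleton_ne_zero hε).measurableSet.compl
  have hK0 : ν.restrict Sᶜ K = 0 := by
    refine (h.restrict hS).measure_eq_zero_of_isCompact hε hK fun x _ => ?_
    rw [restrict_apply (measurableSet_singleton x)]
    by_cases hx : ν {x} = 0
    · exact measure_mono_null Set.inter_subset_left hx
    · rw [Set.singleton_inter_eq_empty.2 (not_not.2 hx), measure_empty]
  have hSc : ν Sᶜ = 0 := by
    rw [← restrict_apply_univ, ← Set.union_compl_self K, ← nonpos_iff_eq_zero]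
    calc ν.restrict Sᶜ (K ∪ Kᶜ) ≤ ν.restrict Sᶜ K + ν.restrict Sᶜ Kᶜ :=
          measure_union_le _ _
      _ ≤ 0 + ν Kᶜ := add_le_add hK0.le (restrict_apply_le _ _)
      _ = 0 := by rw [hνK, add_zero]
  rw [← ae_mem_finset_iff, ae_iff]
  simpa [S, Set.compl_ofPred] using hSc

theorem HasMassGap.exists_eq_sum_fin_dirac (h : ν.HasMassGap ε) (hε : ε ≠ 0) {K : Set X}
    (hK : IsCompact K) (hνK : ν Kᶜ = 0) :
    ∃ (N : ℕ) (x : Fin N → X), (∀ i, ν {x i} ≠ 0) ∧ ν = ∑ i, ν {x i} • dirac (x i) := by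
  set F := (h.finite_setOf_measure_singleton_ne_zero hε).toFinset
  refine ⟨F.card, fun i => F.equivFin.symm i, fun i => ?_, ?_⟩
  · exact (Set.Finite.mem_toFinset _).1 (F.equivFin.symm i).2
  · rw [Equiv.sum_comp F.equivFin.symm (fun y : F => ν {(y : X)} • dirac (y : X)),
      Finset.sum_coe_sort F fun y => ν {y} • dirac y]
    exact h.eq_sum_dirac hε hK hνK

end Metric

end MeasureTheory.Measure

theorem Real.le_of_rpow_one_div_le_mul_rpow {a C p r : ℝ} (ha : 0 < a) (hp : 0 < p)
    (hpr : p < r) (h : a ^ (1 / r) ≤ C * a ^ (1 / p)) : C ^ (-(p * r) / (r - p)) ≤ a := by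
  have hr : 0 < r := hp.trans hpr
  set q := 1 / p - 1 / r
  have hq : 0 < q := sub_pos.2 (one_div_lt_one_div_of_lt hp hpr)
  have hsplit : a ^ (1 / p) = a ^ (1 / r) * a ^ q := by
    rw [← Real.rpow_add ha, add_sub_cancel]
  have hone : 1 ≤ C * a ^ q := by
    rw [hsplit, ← mul_assoc, mul_comm C, mul_assoc] at h
    exact le_of_mul_le_mul_left (by simpa using h) (Real.rpow_pos_of_pos ha _)
  have hC : 0 < C := pos_of_mul_pos_left (one_pos.trans_le hone) (Real.rpow_pos_of_pos ha _).le
  have hexp : -(p * r) / (r - p) = -q⁻¹ := by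
    simp only [q]
    field_simp
  calc C ^ (-(p * r) / (r - p)) = C⁻¹ ^ q⁻¹ := by
        rw [hexp, Real.rpow_neg hC.le, Real.inv_rpow hC.le]
    _ ≤ (a ^ q) ^ q⁻¹ := by
        gcongr
        exact (inv_le_iff_one_le_mul₀' hC).2 hone
    _ = a := by rw [← Real.rpow_mul ha.le, mul_inv_cancel₀ hq.ne', Real.rpow_one]

theorem exists_lipschitz_indicator_le_le_indicator {X : Type*} [PseudoMetricSpace X]
    {K U : Set X} (hK : IsCompact K) (hU : IsOpen U) (hKU : K ⊆ U) :
    ∃ φ : X → ℝ, (∃ L : ℝ≥0, LipschitzWith L φ) ∧ closure (Function.support φ) ⊆ U ∧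
      K.indicator 1 ≤ φ ∧ φ ≤ U.indicator 1 := by
  obtain ⟨δ, hδ, hδU⟩ := hK.exists_cthickening_subset_open hU hKU
  have hthU : Metric.thickening δ K ⊆ U := (Metric.thickening_subset_cthickening δ K).trans hδU
  have hzero : ∀ x ∉ Metric.thickening δ K, (thickenedIndicator hδ K x : ℝ) = 0 :=
    fun x hx => by simp [thickenedIndicator_zero hδ K hx]
  refine ⟨fun x => thickenedIndicator hδ K x,
    ⟨_, isometry_subtype_coe.lipschitz.comp (lipschitzWith_thickenedIndicator hδ K)⟩, ?_,
    fun x => ?_, fun x => ?_⟩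
  · refine (closure_mono fun x hx => ?_).trans
      ((Metric.closure_thickening_subset_cthickening δ K).trans hδU)
    by_contra hx'
    exact hx (hzero x hx')
  · by_cases hx : x ∈ K
    · simp [hx, thickenedIndicator_one hδ K hx]
    · simp [hx]
  · by_cases hx : x ∈ U
    · simpa [hx] using thickenedIndicator_le_one hδ K x
    · exact (hzero x (hx <| hthU ·)).trans_le (Set.indicator_of_notMem hx _).ge

section ReverseHolder

variable {X : Type*} [MetricSpace X] [MeasurableSpace X] [OpensMeasurableSpace X]
  {μ : Measure X} {Ω : Set X} {p r C : ℝ}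

def ReverseHolderOn (μ : Measure X) (Ω : Set X) (p r C : ℝ) : Prop :=
  ∀ φ : X → ℝ, (∃ K : ℝ≥0, LipschitzWith K φ) → IsCompact (closure (Function.support φ)) →
    closure (Function.support φ) ⊆ Ω →
    eLpNorm φ (ENNReal.ofReal r) (μ.restrict Ω) ≤
      ENNReal.ofReal C * eLpNorm φ (ENNReal.ofReal p) (μ.restrict Ω)

theorem ReverseHolderOn.measure_rpow_le (h : ReverseHolderOn μ Ω p r C)
    (hΩ : IsCompact (closure Ω)) (hp : 0 < p) (hr : 0 < r) {K U : Set X} (hK : IsCompact K)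
    (hU : IsOpen U) (hKU : K ⊆ U) (hUΩ : U ⊆ Ω) :
    μ K ^ (1 / r) ≤ ENNReal.ofReal C * μ U ^ (1 / p) := by
  obtain ⟨φ, hφ, hφU, hKφ, hφU'⟩ := exists_lipschitz_indicator_le_le_indicator hK hU hKU
  have hφΩ := hφU.trans hUΩ
  have hφ0 : 0 ≤ φ := fun x => (Set.indicator_nonneg (fun _ _ => zero_le_one) x).trans (hKφ x)
  have hnorm : ∀ {s : Set X} {q : ℝ}, MeasurableSet s → s ⊆ Ω → 0 < q →
      eLpNorm (s.indicator (1 : X → ℝ)) (ENNReal.ofReal q) (μ.restrict Ω) = μ s ^ (1 / q) :=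
    fun hs hsΩ hq => by
      rw [Pi.one_def, eLpNorm_indicator_const hs (by simpa using hq) ofReal_ne_top,
        Measure.restrict_eq_self μ hsΩ, toReal_ofReal hq.le]
      simp
  calc μ K ^ (1 / r) = eLpNorm (K.indicator 1) (ENNReal.ofReal r) (μ.restrict Ω) :=
        (hnorm hK.measurableSet (hKU.trans hUΩ) hr).symm
    _ ≤ eLpNorm φ (ENNReal.ofReal r) (μ.restrict Ω) := eLpNorm_mono_real fun x =>
        (Real.norm_of_nonneg (Set.indicator_nonneg (fun _ _ => zero_le_one) x)).trans_le (hKφ x)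
    _ ≤ ENNReal.ofReal C * eLpNorm φ (ENNReal.ofReal p) (μ.restrict Ω) :=
        h φ hφ (hΩ.of_isClosed_subset isClosed_closure (hφΩ.trans subset_closure)) hφΩ
    _ ≤ ENNReal.ofReal C * eLpNorm (U.indicator 1) (ENNReal.ofReal p) (μ.restrict Ω) := by
        gcongr
        exact eLpNorm_mono_real fun x => (Real.norm_of_nonneg (hφ0 x)).trans_le (hφU' x)
    _ = ENNReal.ofReal C * μ U ^ (1 / p) := by rw [hnorm hU.measurableSet hUΩ hp]

theorem ReverseHolderOn.measure_rpow_le_self [μ.OuterRegular] [IsFiniteMeasureOnCompacts μ]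
    (h : ReverseHolderOn μ Ω p r C) (hΩo : IsOpen Ω) (hΩ : IsCompact (closure Ω)) (hp : 0 < p)
    (hr : 0 < r) {K : Set X} (hK : IsCompact K) (hKΩ : K ⊆ Ω) :
    μ K ^ (1 / r) ≤ ENNReal.ofReal C * μ K ^ (1 / p) := by
  have hbound : ∀ t > μ K, μ K ^ (1 / r) ≤ ENNReal.ofReal C * t ^ (1 / p) := fun t ht => by
    obtain ⟨U, hKU, hU, hUt⟩ := K.exists_isOpen_lt_of_lt t ht
    calc μ K ^ (1 / r) ≤ ENNReal.ofReal C * μ (U ∩ Ω) ^ (1 / p) :=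
          h.measure_rpow_le hΩ hp hr hK (hU.inter hΩo) (Set.subset_inter hKU hKΩ)
            Set.inter_subset_right
      _ ≤ ENNReal.ofReal C * t ^ (1 / p) := by
          gcongr
          exact (measure_mono Set.inter_subset_left).trans hUt.le
  have hcont : Tendsto (fun t => ENNReal.ofReal C * t ^ (1 / p)) (𝓝[>] (μ K))
      (𝓝 (ENNReal.ofReal C * μ K ^ (1 / p))) :=
    (ENNReal.Tendsto.const_mul (ENNReal.continuous_rpow_const.tendsto _)
      (Or.inr ofReal_ne_top)).mono_left nhdsWithin_le_nhds
  have : (𝓝[>] (μ K)).NeBot := nhdsGT_neBot_of_exists_gt ⟨⊤, hK.measure_lt_top⟩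
  exact ge_of_tendsto hcont (eventually_nhdsWithin_of_forall hbound)

theorem ReverseHolderOn.measure_eq_zero_or_le_of_isCompact [μ.OuterRegular]
    [IsFiniteMeasureOnCompacts μ] (h : ReverseHolderOn μ Ω p r C) (hΩo : IsOpen Ω)
    (hΩ : IsCompact (closure Ω)) (hp : 0 < p) (hpr : p < r) (hC : 0 ≤ C) {K : Set X}
    (hK : IsCompact K) (hKΩ : K ⊆ Ω) :
    μ K = 0 ∨ ENNReal.ofReal (C ^ (-(p * r) / (r - p))) ≤ μ K := by
  refine or_iff_not_imp_left.2 fun h0 => ?_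
  have hfin : μ K ≠ ∞ := hK.measure_lt_top.ne
  have key := ENNReal.toReal_mono (by finiteness)
    (h.measure_rpow_le_self hΩo hΩ hp (hp.trans hpr) hK hKΩ)
  rw [ENNReal.toReal_mul, ← ENNReal.toReal_rpow, ← ENNReal.toReal_rpow, toReal_ofReal hC] at key
  rw [← ofReal_toReal hfin]
  exact ofReal_le_ofReal (Real.le_of_rpow_one_div_le_mul_rpow (toReal_pos h0 hfin) hp hpr key)

theorem ReverseHolderOn.hasMassGap [μ.OuterRegular] [IsFiniteMeasureOnCompacts μ]
    [μ.InnerRegularCompactLTTop] (h : ReverseHolderOn μ Ω p r C) (hΩo : IsOpen Ω)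
    (hΩ : IsCompact (closure Ω)) (hp : 0 < p) (hpr : p < r) (hC : 0 ≤ C) :
    (μ.restrict Ω).HasMassGap (ENNReal.ofReal (C ^ (-(p * r) / (r - p)))) := fun A hA => by
  rw [Measure.restrict_apply hA]
  refine or_iff_not_imp_left.2 fun h0 => ?_
  have hfin : μ (A ∩ Ω) ≠ ∞ :=
    ((measure_mono (Set.inter_subset_right.trans subset_closure)).trans_lt hΩ.measure_lt_top).ne
  obtain ⟨K, hKA, hK, hK0⟩ :=
    (hA.inter hΩo.measurableSet).exists_lt_isCompact_of_ne_top hfin (pos_iff_ne_zero.2 h0)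
  exact ((h.measure_eq_zero_or_le_of_isCompact hΩo hΩ hp hpr hC hK
    (hKA.trans Set.inter_subset_right)).resolve_left hK0.ne').trans (measure_mono hKA)

end ReverseHolder

theorem reverse_holder_same_measure_finite_atomic_general
    {X : Type*} [MetricSpace X]
    [MeasurableSpace X] [BorelSpace X]
    (μ : Measure X) [μ.Regular]
    (Ω : Set X) (hΩopen : IsOpen Ω) (hΩcpt : IsCompact (closure Ω))
    (p r : ℝ) (hp : 1 ≤ p) (hpr : p < r)
    (C : ℝ) (hC : 0 < C)
    (hrh : ∀ φ : X → ℝ, (∃ K : ℝ≥0, LipschitzWith K φ) →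
      IsCompact (closure (Function.support φ)) →
      closure (Function.support φ) ⊆ Ω →
      eLpNorm φ (ENNReal.ofReal r) (μ.restrict Ω) ≤
        ENNReal.ofReal C * eLpNorm φ (ENNReal.ofReal p) (μ.restrict Ω)) :
    (∃ (N : ℕ) (x : Fin N → X) (c : Fin N → ℝ),
      (∀ i, x i ∈ Ω) ∧ (∀ i, C ^ (-(p * r) / (r - p)) ≤ c i) ∧
      μ.restrict Ω = ∑ i : Fin N, ENNReal.ofReal (c i) • Measure.dirac (x i)) ∧
    ∀ A : Set X, MeasurableSet A → A ⊆ Ω →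
      μ A = 0 ∨ ENNReal.ofReal (C ^ (-(p * r) / (r - p))) ≤ μ A := by
  have hgap : (μ.restrict Ω).HasMassGap (ENNReal.ofReal (C ^ (-(p * r) / (r - p)))) :=
    ReverseHolderOn.hasMassGap hrh hΩopen hΩcpt (by linarith) hpr hC.le
  refine ⟨?_, fun A hA hAΩ => by simpa only [Measure.restrict_eq_self μ hAΩ] using hgap A hA⟩
  have : IsFiniteMeasure (μ.restrict Ω) := isFiniteMeasure_restrict.2
    ((measure_mono subset_closure).trans_lt hΩcpt.measure_lt_top).ne
  obtain ⟨N, x, hx0, hμ⟩ := hgap.exists_eq_sum_fin_dirac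
    (ofReal_pos.2 (Real.rpow_pos_of_pos hC _)).ne' hΩcpt
    (by rw [Measure.restrict_apply' hΩopen.measurableSet, Set.disjoint_iff_inter_eq_empty.1
      (disjoint_compl_left.mono_right subset_closure), measure_empty])
  refine ⟨N, x, fun i => (μ.restrict Ω {x i}).toReal, fun i => ?_, fun i => ?_, ?_⟩
  · by_contra hxΩ
    refine hx0 i ?_
    rw [Measure.restrict_apply (measurableSet_singleton _), Set.singleton_inter_eq_empty.2 hxΩ,
      measure_empty]
  · exact (ofReal_le_iff_le_toReal (measure_ne_top _ _)).1
      ((hgap _ (measurableSet_singleton _)).resolve_left (hx0 i))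
  · simp only [ofReal_toReal (measure_ne_top _ _)]
    exact hμ

/-- Step 1 of Lemma 3.1: in a locally compact metric space with a
Radon measure `μ` and a precompact open `Ω`, if
`‖φ‖_{L^r(Ω,μ)} ≤ C ‖φ‖_{L^p(Ω,μ)}` for all Lipschitz `φ` compactly supported
in `Ω` and `1 ≤ p < r`, then `μ` on `Ω` is a finite sum of point masses of
weight at least `C^{-pr/(r-p)}`; in particular every Borel `A ⊆ Ω` has
`μ A = 0` or `μ A ≥ C^{-pr/(r-p)}`. -/
theorem reverse_holder_same_measure_finite_atomic
    {X : Type*} [MetricSpace X] [LocallyCompactSpace X]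
    [MeasurableSpace X] [BorelSpace X]
    (μ : Measure X) [μ.Regular]
    (Ω : Set X) (hΩopen : IsOpen Ω) (hΩcpt : IsCompact (closure Ω))
    (p r : ℝ) (hp : 1 ≤ p) (hpr : p < r)
    (C : ℝ) (hC : 0 < C)
    (hrh : ∀ φ : X → ℝ, (∃ K : ℝ≥0, LipschitzWith K φ) →
      IsCompact (closure (Function.support φ)) →
      closure (Function.support φ) ⊆ Ω →
      eLpNorm φ (ENNReal.ofReal r) (μ.restrict Ω) ≤
        ENNReal.ofReal C * eLpNorm φ (ENNReal.ofReal p) (μ.restrict Ω)) :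
    (∃ (N : ℕ) (x : Fin N → X) (c : Fin N → ℝ),
      (∀ i, x i ∈ Ω) ∧ (∀ i, C ^ (-(p * r) / (r - p)) ≤ c i) ∧
      μ.restrict Ω = ∑ i : Fin N, ENNReal.ofReal (c i) • Measure.dirac (x i)) ∧
    ∀ A : Set X, MeasurableSet A → A ⊆ Ω →
      μ A = 0 ∨ ENNReal.ofReal (C ^ (-(p * r) / (r - p))) ≤ μ A :=
  reverse_holder_same_measure_finite_atomic_general μ Ω hΩopen hΩcpt p r hp hpr C hC hrh
end
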